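/- arXiv:2212.03501 — 5 statements merged into one kernel-verified Lean document; each statement's English description precedes it below -/
import Mathlib

section
/- For a finite hypergraph (E,V) with every edge nonempty, and for sets of colors X and Y with C = X ⊔ Y (disjoint union), the proper colorings of (E,V) by C (maps V → C such that no edge is monochromatic) are in bijection with triples consisting of a subset U ⊆ V, a proper coloring of the restricted hypergraph (E|U, U) by X, and a proper coloring of (E|U^c, U^c) by Y. Here E|U = {e ∈ E : h(e) ⊆ U}. -/
/-!
A coloring `c : V → X ⊕ Y` is the same as the set `U` of vertices with colors in `X` together
with colorings of `U` by `X` and of `Uᶜ` by `Y`. Under this correspondence `c` is proper exactly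
when both parts are: an edge meeting both `U` and `Uᶜ` is never monochromatic, while an edge
inside `U` (resp. `Uᶜ`) is monochromatic under `c` iff it is so under the `X`-part (resp. the
`Y`-part), since `Sum.inl` and `Sum.inr` are injective.
-/

/-- A proper coloring of a hypergraph `h : E → Set V` by a color set `C`:
no edge is monochromatic, i.e. every edge has two vertices with different colors. -/
def Proper {E V C : Type*} (h : E → Set V) (c : V → C) : Prop :=
  ∀ e : E, ∃ u ∈ h e, ∃ v ∈ h e, c u ≠ c v

/-- Restriction of a hypergraph to a vertex subset `U`: the edges are those
contained in `U`, with their vertex sets viewed inside `U`. -/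
def restrictH {E V : Type*} (h : E → Set V) (U : Set V) :
    {e : E // h e ⊆ U} → Set U :=
  fun e => {v : U | (v : V) ∈ h e.1}

def Equiv.subtypeSigmaEquivSigmaSubtype {α : Type*} {β : α → Type*} (p : ∀ a, β a → Prop) :
    {s : Σ a, β a // p s.1 s.2} ≃ Σ a, {b : β a // p a b} where
  toFun s := ⟨s.1.1, s.1.2, s.2⟩
  invFun s := ⟨⟨s.1, s.2.1⟩, s.2.2⟩
  left_inv _ := rfl
  right_inv _ := rfl

section Proper

variable {E V C D : Type*} {h : E → Set V}

theorem proper_comp_iff {f : C → D} (hf : Function.Injective f) {c : V → C} :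
    Proper h (f ∘ c) ↔ Proper h c := by
  simp only [Proper, Function.comp, hf.ne_iff]

theorem Proper.restrictH {c : V → C} (hc : Proper h c) (U : Set V) :
    Proper (restrictH h U) (fun v : U => c v) := by
  rintro ⟨e, he⟩
  obtain ⟨u, hu, v, hv, huv⟩ := hc e
  exact ⟨⟨u, he hu⟩, hu, ⟨v, he hv⟩, hv, huv⟩

end Proper

section SumColoring

variable {V X Y : Type*}

open Classical in
noncomputable def joinColoring {U : Set V} (cx : U → X) (cy : ↥Uᶜ → Y) : V → X ⊕ Y :=
  fun v => if hv : v ∈ U then .inl (cx ⟨v, hv⟩) else .inr (cy ⟨v, hv⟩)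

def splitColoring (c : V → X ⊕ Y) : Σ U : Set V, (U → X) × (↥Uᶜ → Y) :=
  ⟨{v | (c v).isLeft}, fun v => (c v).getLeft v.2,
    fun v => (c v).getRight (Sum.not_isLeft.mp v.2)⟩

theorem joinColoring_of_mem {U : Set V} (cx : U → X) (cy : ↥Uᶜ → Y) {v : V} (hv : v ∈ U) :
    joinColoring cx cy v = .inl (cx ⟨v, hv⟩) :=
  dif_pos hv

theorem joinColoring_of_notMem {U : Set V} (cx : U → X) (cy : ↥Uᶜ → Y) {v : V} (hv : v ∉ U) :
    joinColoring cx cy v = .inr (cy ⟨v, hv⟩) :=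
  dif_neg hv

theorem isLeft_joinColoring {U : Set V} (cx : U → X) (cy : ↥Uᶜ → Y) (v : V) :
    (joinColoring cx cy v).isLeft ↔ v ∈ U := by
  by_cases hv : v ∈ U
  · simp [joinColoring_of_mem cx cy hv, hv]
  · simp [joinColoring_of_notMem cx cy hv, hv]

theorem joinColoring_splitColoring (c : V → X ⊕ Y) :
    joinColoring (splitColoring c).2.1 (splitColoring c).2.2 = c := by
  funext v
  by_cases hv : (c v).isLeft
  · exact (joinColoring_of_mem (U := {v | (c v).isLeft}) _ _ hv).trans (Sum.inl_getLeft _ hv)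
  · exact (joinColoring_of_notMem (U := {v | (c v).isLeft}) _ _ hv).trans
      (Sum.inr_getRight _ (Sum.not_isLeft.mp hv))

theorem joinColoring_injective :
    Function.Injective fun s : Σ U : Set V, (U → X) × (↥Uᶜ → Y) => joinColoring s.2.1 s.2.2 := by
  rintro ⟨U, cx, cy⟩ ⟨U', cx', cy'⟩ hc
  simp only at hc
  obtain rfl : U = U' := Set.ext fun v => by
    rw [← isLeft_joinColoring cx cy, ← isLeft_joinColoring cx' cy', hc]
  obtain rfl : cx = cx' := funext fun v => Sum.inl_injective <| by
    rw [← joinColoring_of_mem cx cy v.2, ← joinColoring_of_mem cx' cy' v.2, hc]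
  obtain rfl : cy = cy' := funext fun v => Sum.inr_injective <| by
    rw [← joinColoring_of_notMem cx cy v.2, ← joinColoring_of_notMem cx cy' v.2, hc]
  rfl

noncomputable def sumColoringEquiv : (V → X ⊕ Y) ≃ Σ U : Set V, (U → X) × (↥Uᶜ → Y) where
  toFun := splitColoring
  invFun s := joinColoring s.2.1 s.2.2
  left_inv := joinColoring_splitColoring
  right_inv _ := joinColoring_injective (joinColoring_splitColoring _)

theorem proper_joinColoring_iff {E : Type*} (h : E → Set V) {U : Set V} (cx : U → X)
    (cy : ↥Uᶜ → Y) :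
    Proper h (joinColoring cx cy) ↔ Proper (restrictH h U) cx ∧ Proper (restrictH h Uᶜ) cy := by
  constructor
  · intro hc
    have hx : (fun v : U => joinColoring cx cy v) = Sum.inl ∘ cx :=
      funext fun v => joinColoring_of_mem cx cy v.2
    have hy : (fun v : ↥Uᶜ => joinColoring cx cy v) = Sum.inr ∘ cy :=
      funext fun v => joinColoring_of_notMem cx cy v.2
    exact ⟨(proper_comp_iff Sum.inl_injective).mp (hx ▸ hc.restrictH U),
      (proper_comp_iff Sum.inr_injective).mp (hy ▸ hc.restrictH Uᶜ)⟩
  · rintro ⟨hcx, hcy⟩ e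
    by_cases heU : h e ⊆ U
    · obtain ⟨⟨u, huU⟩, hu, ⟨v, hvU⟩, hv, huv⟩ := hcx ⟨e, heU⟩
      refine ⟨u, hu, v, hv, ?_⟩
      rw [joinColoring_of_mem cx cy huU, joinColoring_of_mem cx cy hvU]
      exact Sum.inl_injective.ne huv
    by_cases heUc : h e ⊆ Uᶜ
    · obtain ⟨⟨u, huU⟩, hu, ⟨v, hvU⟩, hv, huv⟩ := hcy ⟨e, heUc⟩
      refine ⟨u, hu, v, hv, ?_⟩
      rw [joinColoring_of_notMem cx cy huU, joinColoring_of_notMem cx cy hvU]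
      exact Sum.inr_injective.ne huv
    obtain ⟨u, hu, huU⟩ := Set.not_subset.mp heUc
    obtain ⟨v, hv, hvU⟩ := Set.not_subset.mp heU
    refine ⟨u, hu, v, hv, ?_⟩
    rw [joinColoring_of_mem cx cy (Set.not_notMem.mp huU), joinColoring_of_notMem cx cy hvU]
    exact Sum.inl_ne_inr

end SumColoring

theorem colorings_sum_equiv_general {E V X Y : Type*}
    (h : E → Set V) :
    Nonempty ({c : V → X ⊕ Y // Proper h c} ≃
      Σ U : Set V, {cx : U → X // Proper (restrictH h U) cx} ×
        {cy : ↥(Uᶜ) → Y // Proper (restrictH h Uᶜ) cy}) :=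
  ⟨calc {c : V → X ⊕ Y // Proper h c}
      _ ≃ {s : Σ U : Set V, (U → X) × (↥Uᶜ → Y) // Proper h (joinColoring s.2.1 s.2.2)} :=
        sumColoringEquiv.subtypeEquivOfSubtype'
      _ ≃ {s : Σ U : Set V, (U → X) × (↥Uᶜ → Y) //
            Proper (restrictH h s.1) s.2.1 ∧ Proper (restrictH h s.1ᶜ) s.2.2} :=
        Equiv.subtypeEquivRight fun s => proper_joinColoring_iff h s.2.1 s.2.2
      _ ≃ Σ U : Set V, {c : (U → X) × (↥Uᶜ → Y) //
            Proper (restrictH h U) c.1 ∧ Proper (restrictH h Uᶜ) c.2} :=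
        Equiv.subtypeSigmaEquivSigmaSubtype fun (U : Set V) (c : (U → X) × (↥Uᶜ → Y)) =>
          Proper (restrictH h U) c.1 ∧ Proper (restrictH h Uᶜ) c.2
      _ ≃ _ := Equiv.sigmaCongrRight fun _ => Equiv.subtypeProdEquivProd⟩

/-- Proper colorings of `(E,V)` by a disjoint union of color sets `X ⊕ Y` are in
bijection with triples: a vertex subset `U`, a proper coloring of `(E|U, U)` by `X`,
and a proper coloring of `(E|Uᶜ, Uᶜ)` by `Y`. -/
theorem colorings_sum_equiv {E V X Y : Type*} [Fintype E] [Fintype V]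
    (h : E → Set V) (hne : ∀ e, (h e).Nonempty) :
    Nonempty ({c : V → X ⊕ Y // Proper h c} ≃
      Σ U : Set V, {cx : U → X // Proper (restrictH h U) cx} ×
        {cy : ↥(Uᶜ) → Y // Proper (restrictH h Uᶜ) cy}) :=
  colorings_sum_equiv_general h
end

section
/- For every finite hypergraph (E,V) with all edges of size ≥ 1, the counting function n ↦ χ_{E,V}(n) (number of maps V → Fin n with no edge monochromatic) agrees with a polynomial in n with integer coefficients; moreover this polynomial has zero constant term whenever V is nonempty. -/
/-- Number of proper colorings with `n` colors. -/
noncomputable def chrom {E V : Type*} (h : E → Set V) (n : ℕ) : ℕ :=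
  Nat.card {c : V → Fin n // Proper h c}

open Finset Polynomial

section Components

variable {E V : Type*} (h : E → Set V)

def edgeSetoid (S : Finset E) : Setoid V :=
  Relation.EqvGen.setoid fun u v ↦ ∃ e ∈ S, u ∈ h e ∧ v ∈ h e

noncomputable def numComponents (S : Finset E) : ℕ :=
  Nat.card (Quotient (edgeSetoid h S))

variable {h}

lemma edgeSetoid_le_ker_iff {C : Type*} {S : Finset E} {c : V → C} :
    edgeSetoid h S ≤ Setoid.ker c ↔ ∀ e ∈ S, ∀ u ∈ h e, ∀ v ∈ h e, c u = c v :=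
  ⟨fun hle e he _ hu _ hv ↦ hle (.rel _ _ ⟨e, he, hu, hv⟩),
    fun hmono ↦ Setoid.eqvGen_le fun _ _ ⟨e, he, hu, hv⟩ ↦ hmono e he _ hu _ hv⟩

variable (h)

lemma card_monochromatic_on [Finite V] (C : Type*) (S : Finset E) :
    Nat.card {c : V → C // ∀ e ∈ S, ∀ u ∈ h e, ∀ v ∈ h e, c u = c v} =
      Nat.card C ^ numComponents h S := by
  simp_rw [← edgeSetoid_le_ker_iff]
  rw [Nat.card_congr (Setoid.liftEquiv _), Nat.card_fun, numComponents]

end Components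

section ChromaticPolynomial

variable {E V : Type*} [Fintype E] (h : E → Set V)

lemma chrom_eq_sum_powerset [Fintype V] (n : ℕ) :
    (chrom h n : ℤ) = ∑ S ∈ univ.powerset, (-1) ^ #S * (n : ℤ) ^ numComponents h S := by
  classical
  let mono (e : E) : Finset (V → Fin n) := {c | ∀ u ∈ h e, ∀ v ∈ h e, c u = c v}
  have card_proper : chrom h n = #(univ.inf fun e ↦ (mono e)ᶜ) := by
    rw [chrom, Nat.card_eq_fintype_card, Fintype.card_subtype]
    congr 1
    ext c
    rw [mem_filter]
    simp [mono, mem_inf, Proper]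
  have card_inf_mono (S : Finset E) : #(S.inf mono) = n ^ numComponents h S := by
    convert card_monochromatic_on h (Fin n) S using 1
    · rw [Nat.card_eq_fintype_card, Fintype.card_subtype]
      congr 1
      ext c
      simp [mono, mem_inf]
    · rw [Nat.card_fin]
  rw [card_proper, inclusion_exclusion_card_inf_compl]
  simp only [card_inf_mono, Nat.cast_pow]

noncomputable def chromPoly : ℤ[X] :=
  ∑ S ∈ univ.powerset, C ((-1) ^ #S) * X ^ numComponents h S

lemma eval_chromPoly [Fintype V] (n : ℕ) : (chromPoly h).eval (n : ℤ) = chrom h n := by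
  simp [chromPoly, eval_finsetSum, chrom_eq_sum_powerset]

end ChromaticPolynomial

lemma chrom_zero {E V : Type*} [Nonempty V] (h : E → Set V) : chrom h 0 = 0 := by
  simp [chrom]

theorem chrom_is_polynomial_general {E V : Type*} [Fintype E] [Fintype V]
    (h : E → Set V) :
    ∃ p : Polynomial ℤ, (∀ n : ℕ, (chrom h n : ℤ) = p.eval (n : ℤ)) ∧
      (Nonempty V → p.coeff 0 = 0) := by
  refine ⟨chromPoly h, fun n ↦ (eval_chromPoly h n).symm, fun _ ↦ ?_⟩
  rw [coeff_zero_eq_eval_zero, ← Nat.cast_zero, eval_chromPoly, chrom_zero, Nat.cast_zero]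

/-- The chromatic counting function of a finite hypergraph with all edges nonempty
agrees with an integer polynomial, whose constant term is zero if `V` is nonempty. -/
theorem chrom_is_polynomial {E V : Type*} [Fintype E] [Fintype V]
    (h : E → Set V) (hne : ∀ e, (h e).Nonempty) :
    ∃ p : Polynomial ℤ, (∀ n : ℕ, (chrom h n : ℤ) = p.eval (n : ℤ)) ∧
      (Nonempty V → p.coeff 0 = 0) :=
  chrom_is_polynomial_general h
end

section
/- For a finite hypergraph (E,V) with all edges nonempty, and finite color sets X and Y, the proper colorings of (E,V) by X × Y are in bijection with triples consisting of: a subset F ⊆ E, a proper coloring of the hypergraph (F,V) by X, and a proper coloring of the contracted hypergraph (F^c, V/F) by Y. Here V/F is the quotient of V identifying the vertices of each connected component of (F,V), and F^c = E \ F with edges mapped forward under V → V/F. -/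
/-- Two vertices are related if they lie on a common edge belonging to `F`. -/
def touchRel {E V : Type*} (h : E → Set V) (F : Set E) (u v : V) : Prop :=
  ∃ e ∈ F, u ∈ h e ∧ v ∈ h e

/-- The setoid on `V` generated by the edges of `F`; its quotient is `V/F`,
collapsing each connected component of `(F,V)` to a point. -/
def contrSetoid {E V : Type*} (h : E → Set V) (F : Set E) : Setoid V :=
  Relation.EqvGen.setoid (touchRel h F)

/-- The contracted hypergraph `(Fᶜ, V/F)`: edges are those not in `F`, with
vertex sets pushed forward along `V → V/F`. -/
def contractH {E V : Type*} (h : E → Set V) (F : Set E) :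
    {e : E // e ∉ F} → Set (Quotient (contrSetoid h F)) :=
  fun e => Quotient.mk (contrSetoid h F) '' h e.1

/-!
A coloring `c = (cx, cy)` by `X × Y` determines the set `F` of edges on which `cy` is constant.
Since `cy` is constant on every edge of `F`, it is constant on the components of `(F, V)` and
descends to `V/F`. An edge in `F` is then not monochromatic for `c` exactly when it is not
monochromatic for `cx`, and an edge outside `F` is never monochromatic for `cy`, so `c` is proper
iff `cx` is proper on `(F, V)` and the descended `cy` is proper on `(Fᶜ, V/F)`. Conversely, the set
of `Y`-monochromatic edges of `v ↦ (cx v, cy ⟦v⟧)` is `F` again, so the colorings with a given `F`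
correspond exactly to such pairs.
-/

section

variable {E V C X Y : Type*} {h : E → Set V}

variable (h) in
def monoEdges (f : V → C) : Set E :=
  {e | ∀ u ∈ h e, ∀ v ∈ h e, f u = f v}

lemma contrSetoid_le_ker {F : Set E} {f : V → C} (hF : F ⊆ monoEdges h f) :
    contrSetoid h F ≤ Setoid.ker f :=
  Setoid.eqvGen_le fun _ _ ⟨_, he, hu, hv⟩ => hF he _ hu _ hv

lemma monoEdges_comp_mk {F : Set E} {g : Quotient (contrSetoid h F) → C}
    (hg : Proper (contractH h F) g) : monoEdges h (g ∘ Quotient.mk _) = F := by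
  ext e
  constructor
  · intro he
    by_contra heF
    obtain ⟨_, ⟨u, hu, rfl⟩, _, ⟨v, hv, rfl⟩, hne⟩ := hg ⟨e, heF⟩
    exact hne (he u hu v hv)
  · intro heF u hu v hv
    exact congrArg g (Quotient.sound (Relation.EqvGen.rel _ _ ⟨e, heF, hu, hv⟩))

lemma proper_lift_of_monoEdges_eq {F : Set E} {f : V → C} (hF : monoEdges h f = F) :
    Proper (contractH h F) (Quotient.lift f fun _ _ hab => contrSetoid_le_ker hF.ge hab) := by
  rintro ⟨e, heF⟩
  rw [← hF, monoEdges, Set.mem_ofPred_eq] at heF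
  push Not at heF
  obtain ⟨u, hu, v, hv, hne⟩ := heF
  exact ⟨_, ⟨u, hu, rfl⟩, _, ⟨v, hv, rfl⟩, hne⟩

lemma Proper.fst_restrict {F : Set E} {c : V → X × Y} (hc : Proper h c)
    (hF : F ⊆ monoEdges h (Prod.snd ∘ c)) :
    Proper (fun e : F => h e) (Prod.fst ∘ c) := by
  rintro ⟨e, heF⟩
  obtain ⟨u, hu, v, hv, hne⟩ := hc e
  exact ⟨u, hu, v, hv, fun hfst => hne (Prod.ext hfst (hF heF u hu v hv))⟩

lemma proper_pair {F : Set E} {cx : V → X} {cy : Quotient (contrSetoid h F) → Y}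
    (hcx : Proper (fun e : F => h e) cx) (hcy : Proper (contractH h F) cy) :
    Proper h fun v => (cx v, cy ⟦v⟧) := by
  intro e
  by_cases heF : e ∈ F
  · obtain ⟨u, hu, v, hv, hne⟩ := hcx ⟨e, heF⟩
    exact ⟨u, hu, v, hv, fun huv => hne (congrArg Prod.fst huv)⟩
  · obtain ⟨_, ⟨u, hu, rfl⟩, _, ⟨v, hv, rfl⟩, hne⟩ := hcy ⟨e, heF⟩
    exact ⟨u, hu, v, hv, fun huv => hne (congrArg Prod.snd huv)⟩

def properFiberEquiv (F : Set E) :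
    {c : {c : V → X × Y // Proper h c} // monoEdges h (Prod.snd ∘ c.1) = F} ≃
      {cx : V → X // Proper (fun e : F => h e) cx} ×
        {cy : Quotient (contrSetoid h F) → Y // Proper (contractH h F) cy} where
  toFun c :=
    (⟨Prod.fst ∘ c.1.1, c.1.2.fst_restrict c.2.ge⟩,
      ⟨_, proper_lift_of_monoEdges_eq c.2⟩)
  invFun p := ⟨⟨fun v => (p.1.1 v, p.2.1 ⟦v⟧), proper_pair p.1.2 p.2.2⟩, monoEdges_comp_mk p.2.2⟩
  left_inv _ := rfl
  right_inv _ := Prod.ext rfl (Subtype.ext (funext fun q => Quotient.inductionOn q fun _ => rfl))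

variable (h) in
def properProdEquiv :
    {c : V → X × Y // Proper h c} ≃
      Σ F : Set E,
        {cx : V → X // Proper (fun e : F => h e) cx} ×
        {cy : Quotient (contrSetoid h F) → Y // Proper (contractH h F) cy} :=
  (Equiv.sigmaFiberEquiv fun c => monoEdges h (Prod.snd ∘ c.1)).symm.trans
    (Equiv.sigmaCongrRight properFiberEquiv)

end

theorem colorings_prod_equiv_general {E V X Y : Type*} (h : E → Set V) :
    Nonempty ({c : V → X × Y // Proper h c} ≃
      Σ F : Set E,
        {cx : V → X // Proper (fun e : F => h e) cx} ×
        {cy : Quotient (contrSetoid h F) → Y // Proper (contractH h F) cy}) :=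
  ⟨properProdEquiv h⟩

/-- Proper colorings of `(E,V)` by `X × Y` are in bijection with triples:
a subset `F ⊆ E`, a proper coloring of `(F,V)` by `X`, and a proper
coloring of the contraction `(Fᶜ, V/F)` by `Y`. -/
theorem colorings_prod_equiv {E V X Y : Type*} [Fintype E] [Fintype V]
    [Fintype X] [Fintype Y] (h : E → Set V) (hne : ∀ e, (h e).Nonempty) :
    Nonempty ({c : V → X × Y // Proper h c} ≃
      Σ F : Set E,
        {cx : V → X // Proper (fun e : F => h e) cx} ×
        {cy : Quotient (contrSetoid h F) → Y // Proper (contractH h F) cy}) :=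
  colorings_prod_equiv_general h
end

section
/- The extraction-contraction coproduct δ is coassociative on hypergraphs with no empty edges: for disjoint edge subsets A, B ⊆ E, contracting by A ∪ B is the same as first contracting by A and then contracting by (the image of) B, i.e., the quotient V → V/(A∪B) factors as V → V/A → (V/A)/B and these quotients of V are equal. -/
/-- The setoid on `V/A` generated by the images of the edges of `B`:
contracting `V/A` by the induced edges of `B`. -/
def secondSetoid {E V : Type*} (h : E → Set V) (A B : Set E) :
    Setoid (Quotient (contrSetoid h A)) :=
  Relation.EqvGen.setoid (fun x y => ∃ e ∈ B,
    x ∈ Quotient.mk (contrSetoid h A) '' h e ∧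
    y ∈ Quotient.mk (contrSetoid h A) '' h e)

/-! Contracting `V/S` by the images of a relation `r` on `V` identifies exactly the vertices
identified by `S ⊔ r`: the equivalence generated on `V/S` lies in the kernel of
`V/S → V/(S ⊔ r)`, and conversely both `S` and `r` are killed by `V → V/S → (V/S)/r`.
Since the touching relation of `A ∪ B` is the join of those of `A` and `B`, the kernel of
`V → V/A → (V/A)/B` is the contraction setoid of `A ∪ B`, and the first isomorphism theorem
gives the bijection. -/

namespace Setoid

variable {V : Type*}

theorem ker_mk_comp_mk_eqvGen_map (S : Setoid V) (r : V → V → Prop) :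
    ker (Quotient.mk (Relation.EqvGen.setoid (Relation.Map r (Quotient.mk S) (Quotient.mk S))) ∘
      Quotient.mk S) = S ⊔ Relation.EqvGen.setoid r := by
  refine le_antisymm (fun u v huv => ?_)
    (sup_le (fun u v huv => ?_) (eqvGen_le fun u v huv => ?_))
  · have hmap : Relation.EqvGen.setoid (Relation.Map r (Quotient.mk S) (Quotient.mk S)) ≤
        ker (map_of_le (le_sup_left : S ≤ S ⊔ Relation.EqvGen.setoid r)) := by
      refine eqvGen_le ?_
      rintro _ _ ⟨a, b, hab, rfl, rfl⟩
      exact Quotient.sound (le_sup_right (a := S) (Relation.EqvGen.rel _ _ hab))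
    exact Quotient.exact (hmap (Quotient.exact huv))
  · exact congrArg (Quotient.mk _) (Quotient.sound huv)
  · exact Quotient.sound (Relation.EqvGen.rel _ _ ⟨u, v, huv, rfl, rfl⟩)

end Setoid

section Contraction

variable {E V : Type*} (h : E → Set V) (A B : Set E)

theorem touchRel_union : touchRel h (A ∪ B) = touchRel h A ⊔ touchRel h B := by
  ext u v
  simp only [touchRel, Set.mem_union, or_and_right, exists_or, Pi.sup_apply, sup_Prop_eq]

theorem contrSetoid_union : contrSetoid h (A ∪ B) = contrSetoid h A ⊔ contrSetoid h B := by
  rw [contrSetoid, touchRel_union]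
  exact Setoid.gi.gc.l_sup

theorem secondSetoid_eq_eqvGen_map : secondSetoid h A B =
    Relation.EqvGen.setoid (Relation.Map (touchRel h B) (Quotient.mk (contrSetoid h A))
      (Quotient.mk (contrSetoid h A))) := by
  unfold secondSetoid
  congr
  ext x y
  constructor
  · rintro ⟨e, he, ⟨a, ha, rfl⟩, ⟨b, hb, rfl⟩⟩
    exact ⟨a, b, ⟨e, he, ha, hb⟩, rfl, rfl⟩
  · rintro ⟨a, b, ⟨e, he, ha, hb⟩, rfl, rfl⟩
    exact ⟨e, he, ⟨a, ha, rfl⟩, ⟨b, hb, rfl⟩⟩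

theorem ker_secondSetoid_mk_comp_mk :
    Setoid.ker (Quotient.mk (secondSetoid h A B) ∘ Quotient.mk (contrSetoid h A)) =
      contrSetoid h (A ∪ B) := by
  rw [secondSetoid_eq_eqvGen_map, Setoid.ker_mk_comp_mk_eqvGen_map, contrSetoid_union]
  rfl

end Contraction

theorem contraction_coassoc_general {E V : Type*} (h : E → Set V) (A B : Set E) :
    ∃ φ : Quotient (contrSetoid h (A ∪ B)) ≃ Quotient (secondSetoid h A B),
      ∀ v : V, φ (Quotient.mk (contrSetoid h (A ∪ B)) v) =
        Quotient.mk (secondSetoid h A B) (Quotient.mk (contrSetoid h A) v) :=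
  ⟨(Quotient.congrRight (Setoid.ext_iff.1 (ker_secondSetoid_mk_comp_mk h A B).symm)).trans
      (Setoid.quotientKerEquivOfSurjective _
        (Quotient.mk_surjective.comp Quotient.mk_surjective)),
    fun _ => rfl⟩

/-- Coassociativity of extraction–contraction: for disjoint edge subsets
`A, B ⊆ E` of a hypergraph with nonempty edges, contracting by `A ∪ B` is the
same as contracting first by `A` and then by (the image of) `B`: there is a
bijection `V/(A ∪ B) ≃ (V/A)/B` compatible with the quotient maps. -/
theorem contraction_coassoc {E V : Type*} (h : E → Set V) (A B : Set E)
    (hAB : Disjoint A B) (hne : ∀ e, (h e).Nonempty) :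
    ∃ φ : Quotient (contrSetoid h (A ∪ B)) ≃ Quotient (secondSetoid h A B),
      ∀ v : V, φ (Quotient.mk (contrSetoid h (A ∪ B)) v) =
        Quotient.mk (secondSetoid h A B) (Quotient.mk (contrSetoid h A) v) :=
  contraction_coassoc_general h A B
end

section
/- If p(x) ∈ ℚ[x] satisfies p(x·y) = x^n · p(y) + p(x) · y as an identity in ℚ[x,y] for some fixed n ≥ 2, then p(x) = a·(x^n − x) for some constant a ∈ ℚ. -/
/-!
Specialising the identity at points `x = s`, `y = t` gives a functional equation
`f (s * t) = s ^ n * f t + f s * t` for `f = p.eval`. Since `s * t = t * s`, comparing it with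
the equation at `(t, s)` gives `f s * (t ^ n - t) = f t * (s ^ n - s)`, so taking `t = 2`, where
`2 ^ n - 2 ≠ 0` because `n ≥ 2`, shows that `f` is a constant multiple of `s ↦ s ^ n - s`.
-/

open MvPolynomial

theorem eval_mul_of_aeval_X_mul_X {R : Type*} [CommRing R] {n : ℕ} {p : Polynomial R}
    (hp : Polynomial.aeval ((X 0 : MvPolynomial (Fin 2) R) * X 1) p =
      (X 0 : MvPolynomial (Fin 2) R) ^ n * Polynomial.aeval (X 1 : MvPolynomial (Fin 2) R) p
        + Polynomial.aeval (X 0 : MvPolynomial (Fin 2) R) p * X 1)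
    (s t : R) : p.eval (s * t) = s ^ n * p.eval t + p.eval s * t := by
  have h := congrArg (MvPolynomial.aeval ![s, t]) hp
  simp only [map_add, map_mul, map_pow, ← Polynomial.aeval_algHom_apply] at h
  simpa using h

theorem mul_pow_sub_eq_of_map_mul {R : Type*} [CommRing R] {n : ℕ} {f : R → R}
    (hf : ∀ s t, f (s * t) = s ^ n * f t + f s * t) (s t : R) :
    f s * (t ^ n - t) = f t * (s ^ n - s) := by
  have hts := hf t s
  rw [mul_comm t s] at hts
  linear_combination hf s t - hts

theorem eq_div_mul_pow_sub_of_map_mul {K : Type*} [Field K] {n : ℕ} {f : K → K}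
    (hf : ∀ s t, f (s * t) = s ^ n * f t + f s * t) {c : K} (hc : c ^ n - c ≠ 0) (s : K) :
    f s = f c / (c ^ n - c) * (s ^ n - s) := by
  rw [div_mul_eq_mul_div, eq_div_iff hc]
  exact mul_pow_sub_eq_of_map_mul hf s c

theorem two_pow_ne_two {R : Type*} [Semiring R] [LinearOrder R] [IsStrictOrderedRing R] {n : ℕ}
    (hn : 2 ≤ n) : (2 : R) ^ n ≠ 2 := by
  intro h
  have := pow_right_injective₀ (M₀ := R) (by norm_num) (by norm_num) (h.trans (pow_one 2).symm)
  omega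

/-- If `p ∈ ℚ[x]` satisfies `p(x·y) = x^n · p(y) + p(x) · y` as an identity in
`ℚ[x,y]`, with `n ≥ 2`, then `p(x) = a·(x^n − x)` for some `a ∈ ℚ`. -/
theorem functional_eq_mul (n : ℕ) (hn : 2 ≤ n) (p : Polynomial ℚ)
    (hp : Polynomial.aeval ((X 0 : MvPolynomial (Fin 2) ℚ) * X 1) p =
      (X 0 : MvPolynomial (Fin 2) ℚ) ^ n * Polynomial.aeval (X 1 : MvPolynomial (Fin 2) ℚ) p
        + Polynomial.aeval (X 0 : MvPolynomial (Fin 2) ℚ) p * X 1) :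
    ∃ a : ℚ, p = Polynomial.C a * (Polynomial.X ^ n - Polynomial.X) := by
  have hc : (2 : ℚ) ^ n - 2 ≠ 0 := sub_ne_zero.mpr (two_pow_ne_two hn)
  refine ⟨p.eval 2 / (2 ^ n - 2), Polynomial.funext fun s => ?_⟩
  simpa using eq_div_mul_pow_sub_of_map_mul (f := p.eval) (eval_mul_of_aeval_X_mul_X hp) hc s
end
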